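/- arXiv:2106.00555 — 3 statements merged into one kernel-verified Lean document; each statement's English description precedes it below -/
import Mathlib

section
/- Let r ≤ m, let ω_1,…,ω_r be positive reals, and let μ_1,…,μ_r ∈ ℝ^m be linearly independent. Suppose ω'_1,…,ω'_r ∈ ℂ are nonzero and μ'_1,…,μ'_r ∈ ℂ^m satisfy both Σ_{i=1}^r ω'_i (μ'_i·X)³ = Σ_{i=1}^r ω_i (μ_i·X)³ and Σ_{i=1}^r ω'_i (μ'_i·X)² = Σ_{i=1}^r ω_i (μ_i·X)². Then there is a permutation π of {1,…,r} with ω'_i = ω_{π(i)} and μ'_i = μ_{π(i)} for all i. -/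
open MvPolynomial

/-- The linear form `v·X = v₁X₁ + ⋯ + vₘXₘ`. -/
noncomputable def linForm {m : ℕ} (v : Fin m → ℂ) : MvPolynomial (Fin m) ℂ :=
  ∑ i, C (v i) * X i

private noncomputable def cdot {m : ℕ} (v x : Fin m → ℂ) : ℂ := ∑ j, v j * x j

private noncomputable def cmap {m : ℕ} (v : Fin m → ℝ) : Fin m → ℂ := fun j => (v j : ℂ)

private lemma cdot_add {m : ℕ} (v x y : Fin m → ℂ) :
    cdot v (x + y) = cdot v x + cdot v y := by
  simp [cdot, mul_add, Finset.sum_add_distrib]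

private lemma cdot_single {m : ℕ} (v : Fin m → ℂ) (j : Fin m) :
    cdot v (Pi.single j 1) = v j := by
  simp [cdot, Pi.single_apply]

private lemma eval_linForm {m : ℕ} (v : Fin m → ℂ) (x : Fin m → ℂ) :
    eval x (linForm v) = cdot v x := by
  simp [linForm, cdot]

private lemma exists_dual {m r : ℕ} (μ : Fin r → Fin m → ℝ)
    (hμ : LinearIndependent ℝ μ) :
    ∃ w : Fin r → Fin m → ℝ, ∀ i j, ∑ c, μ i c * w j c = if i = j then 1 else 0 := by
  classical
  let T : (Fin r → ℝ) →ₗ[ℝ] (Fin m → ℝ) :=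
    { toFun := fun c => ∑ i, c i • μ i
      map_add' := by
        intro a b; simp [add_smul, Finset.sum_add_distrib]
      map_smul' := by
        intro a b; simp [smul_smul, Finset.smul_sum] }
  have hker : LinearMap.ker T = ⊥ := by
    rw [LinearMap.ker_eq_bot']
    intro c hc
    have := Fintype.linearIndependent_iff.mp hμ c hc
    funext i; exact this i
  obtain ⟨g, hg⟩ := T.exists_leftInverse_of_injective hker
  refine ⟨fun j c => g (Pi.single c 1) j, fun i j => ?_⟩
  have h1 : g (μ i) = Pi.single i 1 := by
    have : μ i = T (Pi.single i 1) := by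
      simp [T, Pi.single_apply, Finset.sum_ite_eq', ite_smul]
    rw [this, ← LinearMap.comp_apply, hg, LinearMap.id_apply]
  have h2 : μ i = ∑ c, μ i c • (Pi.single c 1 : Fin m → ℝ) := by
    funext d; simp [Pi.single_apply, Finset.sum_ite_eq']
  calc ∑ c, μ i c * g (Pi.single c 1) j
      = g (∑ c, μ i c • (Pi.single c 1 : Fin m → ℝ)) j := by
        rw [map_sum]; simp [Finset.sum_apply]
    _ = if i = j then 1 else 0 := by
        rw [← h2, h1, Pi.single_apply]
        simp [eq_comm]

private lemma polar2 {m r : ℕ} (c : Fin r → ℂ) (d : Fin r → Fin m → ℂ) (x y : Fin m → ℂ) :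
    ∑ i, c i * (cdot (d i) (x + y)) ^ 2
      = (∑ i, c i * (cdot (d i) x) ^ 2) + (∑ i, c i * (cdot (d i) y) ^ 2)
        + 2 * ∑ i, c i * (cdot (d i) x * cdot (d i) y) := by
  simp only [cdot_add, Finset.mul_sum, ← Finset.sum_add_distrib]
  exact Finset.sum_congr rfl fun i _ => by ring

private lemma polar3 {m r : ℕ} (c : Fin r → ℂ) (d : Fin r → Fin m → ℂ) (x y z : Fin m → ℂ) :
    ∑ i, c i * (cdot (d i) (x + y + z)) ^ 3
      = (∑ i, c i * (cdot (d i) (x + y)) ^ 3) + (∑ i, c i * (cdot (d i) (x + z)) ^ 3)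
        + (∑ i, c i * (cdot (d i) (y + z)) ^ 3)
        - (∑ i, c i * (cdot (d i) x) ^ 3) - (∑ i, c i * (cdot (d i) y) ^ 3)
        - (∑ i, c i * (cdot (d i) z) ^ 3)
        + 6 * ∑ i, c i * (cdot (d i) x * cdot (d i) y * cdot (d i) z) := by
  simp only [cdot_add, Finset.mul_sum, ← Finset.sum_add_distrib, ← Finset.sum_sub_distrib]
  exact Finset.sum_congr rfl fun i _ => by ring

/-- for r ≤ m, ω_i > 0 and μ₁,…,μ_r ∈ ℝ^m linearly independent, if nonzero
ω'_i ∈ ℂ and μ'_i ∈ ℂ^m reproduce both the third and the second moment forms, i.e.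
Σ ω'_i (μ'_i·X)³ = Σ ω_i (μ_i·X)³ and Σ ω'_i (μ'_i·X)² = Σ ω_i (μ_i·X)², then the
parameters agree up to a permutation. -/
theorem statement_7 (m r : ℕ) (hrm : r ≤ m)
    (ω : Fin r → ℝ) (hω : ∀ i, 0 < ω i)
    (μ : Fin r → Fin m → ℝ) (hμ : LinearIndependent ℝ μ)
    (ω' : Fin r → ℂ) (hω' : ∀ i, ω' i ≠ 0) (μ' : Fin r → Fin m → ℂ)
    (h3 : ∑ i, C (ω' i) * linForm (μ' i) ^ 3
        = ∑ i, C ((ω i : ℂ)) * linForm (fun j => (μ i j : ℂ)) ^ 3)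
    (h2 : ∑ i, C (ω' i) * linForm (μ' i) ^ 2
        = ∑ i, C ((ω i : ℂ)) * linForm (fun j => (μ i j : ℂ)) ^ 2) :
    ∃ π : Equiv.Perm (Fin r),
      ∀ i, ω' i = (ω (π i) : ℂ) ∧ μ' i = fun j => (μ (π i) j : ℂ) := by
  classical
  -- pointwise evaluations
  have E3 : ∀ x : Fin m → ℂ, ∑ i, ω' i * (cdot (μ' i) x) ^ 3
      = ∑ i, (ω i : ℂ) * (cdot (cmap (μ i)) x) ^ 3 := by
    intro x
    have := congrArg (eval x) h3
    unfold cmap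
    simpa [eval_linForm] using this
  have E2 : ∀ x : Fin m → ℂ, ∑ i, ω' i * (cdot (μ' i) x) ^ 2
      = ∑ i, (ω i : ℂ) * (cdot (cmap (μ i)) x) ^ 2 := by
    intro x
    have := congrArg (eval x) h2
    unfold cmap
    simpa [eval_linForm] using this
  -- polarized bilinear identity
  have hB : ∀ x y : Fin m → ℂ, ∑ i, ω' i * (cdot (μ' i) x * cdot (μ' i) y)
      = ∑ i, (ω i : ℂ) * (cdot (cmap (μ i)) x * cdot (cmap (μ i)) y) := by
    intro x y
    have h := E2 (x + y)
    rw [polar2, polar2, E2 x, E2 y] at h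
    exact mul_left_cancel₀ two_ne_zero (by linear_combination h)
  -- polarized trilinear identity
  have hT : ∀ x y z : Fin m → ℂ,
      ∑ i, ω' i * (cdot (μ' i) x * cdot (μ' i) y * cdot (μ' i) z)
      = ∑ i, (ω i : ℂ) * (cdot (cmap (μ i)) x * cdot (cmap (μ i)) y * cdot (cmap (μ i)) z) := by
    intro x y z
    have h := E3 (x + y + z)
    rw [polar3, polar3, E3 (x+y), E3 (x+z), E3 (y+z), E3 x, E3 y, E3 z] at h
    exact mul_left_cancel₀ (by norm_num : (6:ℂ) ≠ 0) (by linear_combination h)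
  -- dual family for μ
  obtain ⟨w, hw⟩ := exists_dual μ hμ
  set W : Fin r → Fin m → ℂ := fun j => cmap (w j) with hWdef
  have hW : ∀ i j, cdot (cmap (μ i)) (W j) = if i = j then 1 else 0 := by
    intro i j
    have : ((∑ c, μ i c * w j c : ℝ) : ℂ) = ((if i = j then 1 else 0 : ℝ) : ℂ) := by
      rw [hw i j]
    simpa [cdot, cmap.eq_def, hWdef, apply_ite (fun t : ℝ => (t : ℂ))] using this
  -- the matrix A
  set A : Matrix (Fin r) (Fin r) ℂ := Matrix.of (fun i j => cdot (μ' i) (W j)) with hAdef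
  have hAapp : ∀ i j, A i j = cdot (μ' i) (W j) := fun i j => rfl
  -- gram identity
  have hAgram : ∀ j k, ∑ i, ω' i * (A i j * A i k) = if j = k then (ω j : ℂ) else 0 := by
    intro j k
    have h := hB (W j) (W k)
    rw [show ∑ i, (ω i : ℂ) * (cdot (cmap (μ i)) (W j) * cdot (cmap (μ i)) (W k))
        = if j = k then (ω j : ℂ) else 0 by
      simp only [hW]
      rw [Finset.sum_eq_single j]
      · simp [eq_comm]
      · intro b _ hb; simp [hb]
      · simp] at h
    exact h
  -- A is invertible
  have hdet : IsUnit A.det := by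
    have hmat : A.transpose * Matrix.diagonal ω' * A = Matrix.diagonal (fun j => (ω j : ℂ)) := by
      ext j k
      rw [Matrix.diagonal_apply, ← hAgram j k, Matrix.mul_apply]
      simp only [Matrix.mul_diagonal, Matrix.transpose_apply]
      exact Finset.sum_congr rfl fun i _ => by ring
    have hdetD : (∏ j : Fin r, (ω j : ℂ)) ≠ 0 :=
      Finset.prod_ne_zero_iff.mpr fun j _ => by exact_mod_cast (hω j).ne'
    have hdets := congrArg Matrix.det hmat
    rw [Matrix.det_mul, Matrix.det_mul, Matrix.det_transpose, Matrix.det_diagonal] at hdets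
    have hAne : A.det ≠ 0 := by
      intro h0
      rw [h0] at hdets
      simp at hdets
      exact hdetD hdets.symm
    exact isUnit_iff_ne_zero.mpr hAne
  have hAB : A * A⁻¹ = 1 := Matrix.mul_nonsing_inv A hdet
  -- dual family for μ'
  set U : Fin r → Fin m → ℂ := fun k c => ∑ j, A⁻¹ j k * W j c with hUdef
  have hU : ∀ i k, cdot (μ' i) (U k) = if i = k then 1 else 0 := by
    intro i k
    have : cdot (μ' i) (U k) = ∑ j, A i j * A⁻¹ j k := by
      simp only [cdot, hUdef, Finset.mul_sum]
      rw [Finset.sum_comm]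
      refine Finset.sum_congr rfl fun j _ => ?_
      rw [hAapp i j, cdot, Finset.sum_mul]
      exact Finset.sum_congr rfl fun c _ => by ring
    rw [this, ← Matrix.mul_apply, hAB, Matrix.one_apply]
  -- key quadratic identity
  have hK : ∀ k (x : Fin m → ℂ), ω' k * (cdot (μ' k) x * cdot (μ' k) x)
      = ∑ j, ((ω j : ℂ) * cdot (cmap (μ j)) (U k)) * (cdot (cmap (μ j)) x * cdot (cmap (μ j)) x) := by
    intro k x
    have h := hT (U k) x x
    rw [show ∑ i, ω' i * (cdot (μ' i) (U k) * cdot (μ' i) x * cdot (μ' i) x)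
        = ω' k * (cdot (μ' k) x * cdot (μ' k) x) by
      rw [Finset.sum_eq_single k]
      · rw [hU]; simp
      · intro b _ hb; rw [hU]; simp [hb]
      · simp] at h
    rw [h]
    exact Finset.sum_congr rfl fun j _ => by ring
  -- coefficient values
  have hc : ∀ k j, (ω j : ℂ) * cdot (cmap (μ j)) (U k) = ω' k * (A k j * A k j) := by
    intro k j
    have h := hK k (W j)
    rw [show (∑ l, ((ω l : ℂ) * cdot (cmap (μ l)) (U k))
          * (cdot (cmap (μ l)) (W j) * cdot (cmap (μ l)) (W j)))
        = (ω j : ℂ) * cdot (cmap (μ j)) (U k) by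
      simp only [hW]
      rw [Finset.sum_eq_single j]
      · simp
      · intro b _ hb; simp [hb]
      · simp] at h
    rw [← h, hAapp k j]
  -- off-diagonal products vanish
  have hAprod : ∀ k j l, j ≠ l → A k j * A k l = 0 := by
    intro k j l hjl
    have h := hT (U k) (W j) (W l)
    rw [Finset.sum_eq_single k (fun b _ hb => by rw [hU]; simp [hb]) (by simp)] at h
    rw [hU, if_pos rfl, one_mul] at h
    rw [Finset.sum_eq_zero (fun t _ => ?_)] at h
    · have := (mul_eq_zero.mp h).resolve_left (hω' k)
      rw [hAapp k j, hAapp k l]; exact this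
    · rw [hW, hW]
      rcases eq_or_ne t j with rfl | ht
      · simp [hjl]
      · simp [ht]
  -- every row of A has a nonzero entry
  have hrow : ∀ k, ∃ j, A k j ≠ 0 := by
    intro k
    by_contra hcon
    push_neg at hcon
    have h1 : (A * A⁻¹) k k = 1 := by rw [hAB]; simp
    rw [Matrix.mul_apply, Finset.sum_eq_zero (fun j _ => by rw [hcon j, zero_mul])] at h1
    exact zero_ne_one h1
  set π0 : Fin r → Fin r := fun k => (hrow k).choose with hπ0def
  have hπ0 : ∀ k, A k (π0 k) ≠ 0 := fun k => (hrow k).choose_spec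
  have hA0 : ∀ k j, j ≠ π0 k → A k j = 0 := by
    intro k j hj
    exact (mul_eq_zero.mp (hAprod k j (π0 k) hj)).resolve_right (hπ0 k)
  -- collapsed key identity
  have hK2 : ∀ k (x : Fin m → ℂ), ω' k * (cdot (μ' k) x * cdot (μ' k) x)
      = ω' k * (A k (π0 k) * A k (π0 k))
        * (cdot (cmap (μ (π0 k))) x * cdot (cmap (μ (π0 k))) x) := by
    intro k x
    rw [hK k x, Finset.sum_congr rfl (fun j _ => by rw [hc k j]),
      Finset.sum_eq_single (π0 k)]
    · intro b _ hb; rw [hA0 k b hb]; ring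
    · simp
  -- each μ' k is proportional to μ (π0 k)
  have hp : ∀ k (x : Fin m → ℂ),
      cdot (μ' k) x = A k (π0 k) * cdot (cmap (μ (π0 k))) x := by
    intro k x
    have h1 := hK2 k x
    have h2 := hK2 k (x + W (π0 k))
    rw [cdot_add, cdot_add, ← hAapp k (π0 k), hW, if_pos rfl] at h2
    have h3 : (2 * ω' k * A k (π0 k))
        * (cdot (μ' k) x - A k (π0 k) * cdot (cmap (μ (π0 k))) x) = 0 := by
      linear_combination h2 - h1
    have hne : (2 * ω' k * A k (π0 k)) ≠ 0 :=
      mul_ne_zero (mul_ne_zero two_ne_zero (hω' k)) (hπ0 k)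
    exact sub_eq_zero.mp ((mul_eq_zero.mp h3).resolve_left hne)
  have hμ'eq : ∀ k, μ' k = fun c => A k (π0 k) * (μ (π0 k) c : ℂ) := by
    intro k
    funext c
    have h := hp k (Pi.single c 1)
    rw [cdot_single, cdot_single] at h
    exact h
  -- π0 is injective
  have hπinj : Function.Injective π0 := by
    intro k l hkl
    by_contra hne
    have h1 : (A * A⁻¹) k l = 0 := by rw [hAB]; exact Matrix.one_apply_ne hne
    have h2 : (A * A⁻¹) l l = 1 := by rw [hAB]; simp
    rw [Matrix.mul_apply, Finset.sum_eq_single (π0 k)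
        (fun b _ hb => by rw [hA0 k b hb, zero_mul]) (by simp)] at h1
    rw [Matrix.mul_apply, Finset.sum_eq_single (π0 l)
        (fun b _ hb => by rw [hA0 l b hb, zero_mul]) (by simp)] at h2
    have h4 : A⁻¹ (π0 k) l = 0 := (mul_eq_zero.mp h1).resolve_left (hπ0 k)
    rw [← hkl, h4, mul_zero] at h2
    exact zero_ne_one h2
  -- the weights
  have e2 : ∀ k, ω' k * (A k (π0 k) * A k (π0 k)) = (ω (π0 k) : ℂ) := by
    intro k
    have h := hB (W (π0 k)) (W (π0 k))
    rw [show (∑ i, (ω i : ℂ) * (cdot (cmap (μ i)) (W (π0 k)) * cdot (cmap (μ i)) (W (π0 k))))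
        = (ω (π0 k) : ℂ) by
      simp only [hW]
      rw [Finset.sum_eq_single (π0 k)]
      · simp
      · intro b _ hb; simp [hb]
      · simp] at h
    rw [← h, Finset.sum_eq_single k]
    · rw [← hAapp k (π0 k)]
    · intro b _ hb
      rw [← hAapp b (π0 k), hA0 b (π0 k) (fun e => hb (hπinj e.symm))]; ring
    · simp
  have e3 : ∀ k, ω' k * (A k (π0 k) * A k (π0 k) * A k (π0 k)) = (ω (π0 k) : ℂ) := by
    intro k
    have h := hT (W (π0 k)) (W (π0 k)) (W (π0 k))
    rw [show (∑ i, (ω i : ℂ) * (cdot (cmap (μ i)) (W (π0 k)) * cdot (cmap (μ i)) (W (π0 k))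
          * cdot (cmap (μ i)) (W (π0 k)))) = (ω (π0 k) : ℂ) by
      simp only [hW]
      rw [Finset.sum_eq_single (π0 k)]
      · simp
      · intro b _ hb; simp [hb]
      · simp] at h
    rw [← h, Finset.sum_eq_single k]
    · rw [← hAapp k (π0 k)]
    · intro b _ hb
      rw [← hAapp b (π0 k), hA0 b (π0 k) (fun e => hb (hπinj e.symm))]; ring
    · simp
  have hlam1 : ∀ k, A k (π0 k) = 1 := by
    intro k
    have h := e3 k
    rw [← e2 k] at h
    have h3 : (ω' k * (A k (π0 k) * A k (π0 k))) * (A k (π0 k) - 1) = 0 := by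
      linear_combination h
    have hne : ω' k * (A k (π0 k) * A k (π0 k)) ≠ 0 :=
      mul_ne_zero (hω' k) (mul_ne_zero (hπ0 k) (hπ0 k))
    exact sub_eq_zero.mp ((mul_eq_zero.mp h3).resolve_left hne)
  refine ⟨Equiv.ofBijective π0 (Finite.injective_iff_bijective.mp hπinj), fun k => ?_⟩
  have hπk : (Equiv.ofBijective π0 (Finite.injective_iff_bijective.mp hπinj)) k = π0 k := rfl
  rw [hπk]
  constructor
  · have h := e2 k
    rw [hlam1 k] at h
    simpa using h
  · have h := hμ'eq k
    rw [hlam1 k] at h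
    simpa using h
end

section
/- Let r ≤ m, let ω_1,…,ω_r ∈ ℂ be nonzero, let μ_1,…,μ_r ∈ ℝ^m be linearly independent, and let T(X) = Σ_{i=1}^r ω_i (μ_i·X)³. Then the kernel of the Hankel map H_T^{1,2} : p ∈ ℂ[X]_2 ↦ (⟨T, X_j p⟩_3)_{j=1,…,m} ∈ ℂ^m is exactly the space of homogeneous polynomials of degree 2 vanishing at each of μ_1,…,μ_r; in particular this kernel has dimension m(m+1)/2 − r and rank H_T^{1,2} = r. -/
open MvPolynomial

/-- The apolar product `⟨p,q⟩_d = Σ_{|α|=d} C(d,α) conj(p_α) q_α` of two homogeneous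
polynomials of degree d, written in terms of the plain coefficients of p and q:
if p = Σ C(d,α) p_α X^α then coeff α p = C(d,α) p_α, so
C(d,α) conj(p_α) q_α = conj(coeff α p) (coeff α q) / C(d,α). -/
noncomputable def apolar {m : ℕ} (p q : MvPolynomial (Fin m) ℂ) : ℂ :=
  ∑ α ∈ p.support ∩ q.support,
    (starRingEnd ℂ) (MvPolynomial.coeff α p) * MvPolynomial.coeff α q /
      (Nat.multinomial α.support α : ℂ)

section aux

variable {m : ℕ}

lemma apolar_eq (p q : MvPolynomial (Fin m) ℂ) :
    apolar p q = ∑ α ∈ q.support,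
      (starRingEnd ℂ) (MvPolynomial.coeff α p) * MvPolynomial.coeff α q /
        (Nat.multinomial α.support α : ℂ) := by
  refine Finset.sum_subset Finset.inter_subset_right ?_
  intro α hα hα'
  have : MvPolynomial.coeff α p = 0 := by
    by_contra h
    exact hα' (Finset.mem_inter.2 ⟨mem_support_iff.2 h, hα⟩)
  simp [this]

lemma apolar_sum {ι : Type*} (s : Finset ι) (f : ι → MvPolynomial (Fin m) ℂ)
    (q : MvPolynomial (Fin m) ℂ) :
    apolar (∑ i ∈ s, f i) q = ∑ i ∈ s, apolar (f i) q := by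
  simp only [apolar_eq, MvPolynomial.coeff_sum, map_sum, Finset.sum_mul, Finset.sum_div]
  exact Finset.sum_comm

lemma apolar_C_mul (c : ℂ) (p q : MvPolynomial (Fin m) ℂ) :
    apolar (C c * p) q = (starRingEnd ℂ) c * apolar p q := by
  simp only [apolar_eq, MvPolynomial.coeff_C_mul, map_mul, Finset.mul_sum]
  congr 1; ext α; ring

lemma multinomial_univ (α : Fin m →₀ ℕ) :
    Nat.multinomial Finset.univ ⇑α = Nat.multinomial α.support ⇑α := by
  have hs : ∑ i ∈ α.support, α i = ∑ i ∈ Finset.univ, α i :=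
    Finset.sum_subset (Finset.subset_univ _) fun i _ hi => Finsupp.notMem_support_iff.1 hi
  have hp : ∏ i ∈ α.support, (α i).factorial = ∏ i ∈ Finset.univ, (α i).factorial :=
    Finset.prod_subset (Finset.subset_univ _) fun i _ hi => by
      rw [Finsupp.notMem_support_iff.1 hi]; rfl
  unfold Nat.multinomial
  rw [← hs, ← hp]

lemma coeff_linForm_pow (v : Fin m → ℂ) (n : ℕ) (α : Fin m →₀ ℕ)
    (hα : ∑ i, α i = n) :
    MvPolynomial.coeff α ((linForm v) ^ n) =
      (Nat.multinomial α.support ⇑α : ℂ) * ∏ i, v i ^ α i := by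
  rw [linForm, Finset.sum_pow_eq_sum_piAntidiag]
  have hterm : ∀ k : Fin m → ℕ,
      (Nat.multinomial Finset.univ k : MvPolynomial (Fin m) ℂ) *
        ∏ i, (C (v i) * X i) ^ k i
      = monomial (Finsupp.equivFunOnFinite.symm k)
          ((Nat.multinomial Finset.univ k : ℂ) * ∏ i, v i ^ k i) := by
    intro k
    have h1 : ∏ i, (C (v i) * X i) ^ k i
        = C (∏ i, v i ^ k i) * ∏ i, (X i : MvPolynomial (Fin m) ℂ) ^ k i := by
      rw [map_prod]
      rw [← Finset.prod_mul_distrib]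
      exact Finset.prod_congr rfl fun i _ => by rw [mul_pow, map_pow]
    have h2 : (∏ i, (X i : MvPolynomial (Fin m) ℂ) ^ k i)
        = monomial (Finsupp.equivFunOnFinite.symm k) 1 := by
      rw [← MvPolynomial.prod_X_pow_eq_monomial]
      refine (Finset.prod_subset (Finset.subset_univ _) ?_).symm
      intro i _ hi
      have : (Finsupp.equivFunOnFinite.symm k) i = 0 := Finsupp.notMem_support_iff.1 hi
      simp only [Finsupp.coe_equivFunOnFinite_symm] at this ⊢
      simp [this]
    rw [h1, h2]
    rw [← MvPolynomial.C_eq_coe_nat, MvPolynomial.C_mul_monomial, MvPolynomial.C_mul_monomial,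
      mul_one]
  simp_rw [hterm]
  rw [MvPolynomial.coeff_sum]
  rw [Finset.sum_eq_single (⇑α)]
  · rw [MvPolynomial.coeff_monomial, if_pos (by simp), multinomial_univ]
  · intro k hk hne
    rw [MvPolynomial.coeff_monomial, if_neg]
    intro h
    exact hne ((by simpa using congrArg (⇑Finsupp.equivFunOnFinite) h : k = Finsupp.equivFunOnFinite α))
  · intro h
    exact absurd (Finset.mem_piAntidiag.2 ⟨hα, fun i _ => Finset.mem_univ i⟩) h

lemma sum_eq_of_mem_support {n : ℕ} {q : MvPolynomial (Fin m) ℂ} (hq : q.IsHomogeneous n)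
    {α : Fin m →₀ ℕ} (hα : α ∈ q.support) : ∑ i, α i = n := by
  have h := hq (MvPolynomial.mem_support_iff.mp hα)
  rw [Pi.one_def, ← Finsupp.degree_eq_weight_one] at h
  rw [← h, Finsupp.degree]
  exact (Finset.sum_subset (Finset.subset_univ _) fun i _ hi =>
    Finsupp.notMem_support_iff.1 hi).symm

lemma apolar_linForm_pow {n : ℕ} (v : Fin m → ℝ) (q : MvPolynomial (Fin m) ℂ)
    (hq : q.IsHomogeneous n) :
    apolar ((linForm fun j => (v j : ℂ)) ^ n) q =
      MvPolynomial.eval (fun j => (v j : ℂ)) q := by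
  rw [apolar_eq, MvPolynomial.eval_eq']
  refine Finset.sum_congr rfl fun α hα => ?_
  rw [coeff_linForm_pow _ n α (sum_eq_of_mem_support hq hα)]
  have hmult : ((Nat.multinomial α.support ⇑α : ℕ) : ℂ) ≠ 0 := by
    have := Nat.multinomial_pos α.support ⇑α
    exact_mod_cast this.ne'
  have hconj : (starRingEnd ℂ) ((Nat.multinomial α.support ⇑α : ℂ) * ∏ i, ((v i : ℂ)) ^ α i)
      = (Nat.multinomial α.support ⇑α : ℂ) * ∏ i, ((v i : ℂ)) ^ α i := by
    simp [map_prod, map_pow, Complex.conj_ofReal, map_natCast]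
  rw [hconj]
  field_simp

lemma linForm_isHomogeneous (v : Fin m → ℂ) : (linForm v).IsHomogeneous 1 :=
  MvPolynomial.IsHomogeneous.sum _ _ _ fun i _ => MvPolynomial.isHomogeneous_C_mul_X _ _

lemma eval_linForm_s8 (f v : Fin m → ℂ) :
    MvPolynomial.eval f (linForm v) = ∑ i, v i * f i := by
  simp [linForm]

noncomputable instance : Fintype {d : Fin m →₀ ℕ | d.degree = 2} :=
  Fintype.ofEquiv _
    ((Sym.equivNatSum (Fin m) 2).trans (Equiv.subtypeEquivRight (fun d => Iff.rfl)))

noncomputable def homog2Equiv :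
    (homogeneousSubmodule (Fin m) ℂ 2) ≃ₗ[ℂ] ({d : Fin m →₀ ℕ | d.degree = 2} →₀ ℂ) :=
  (LinearEquiv.ofEq _ _ (homogeneousSubmodule_eq_finsupp_supported (Fin m) ℂ 2)).trans
    (AddMonoidAlgebra.supportedEquivFinsupp _)

lemma homog2_finiteDimensional :
    FiniteDimensional ℂ (homogeneousSubmodule (Fin m) ℂ 2) :=
  Module.Finite.equiv
    ((homog2Equiv (m := m)).trans
      (Finsupp.linearEquivFunOnFinite ℂ ℂ {d : Fin m →₀ ℕ | d.degree = 2})).symm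

lemma finrank_homog2 :
    Module.finrank ℂ (homogeneousSubmodule (Fin m) ℂ 2) = m * (m + 1) / 2 := by
  classical
  have E : {d : Fin m →₀ ℕ | d.degree = 2} ≃ Sym (Fin m) 2 :=
    ((Sym.equivNatSum (Fin m) 2).trans (Equiv.subtypeEquivRight (fun d => Iff.rfl))).symm
  have hcard : Fintype.card {d : Fin m →₀ ℕ | d.degree = 2} = m * (m + 1) / 2 := by
    rw [Fintype.card_congr E, Fintype.card_congr (Sym2.equivSym (Fin m)).symm, Sym2.card]
    rw [Nat.choose_two_right, Fintype.card_fin]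
    simp [Nat.mul_comm]
  rw [(homog2Equiv (m := m)).finrank_eq]
  rw [Module.finrank_finsupp_self, hcard]

lemma linIndep_complex {r : ℕ} (μ : Fin r → Fin m → ℝ) (hμ : LinearIndependent ℝ μ) :
    LinearIndependent ℂ (fun i => (fun j => (μ i j : ℂ)) : Fin r → Fin m → ℂ) := by
  rw [Fintype.linearIndependent_iff] at hμ ⊢
  intro g hg i
  have h1 : ∀ j, ∑ i, g i * (μ i j : ℂ) = 0 := by
    intro j
    have := congrFun hg j
    simpa [Finset.sum_apply] using this
  have hRe : ∀ i, (g i).re = 0 := by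
    apply hμ
    funext j
    have := congrArg Complex.re (h1 j)
    simpa [Complex.re_sum, Complex.mul_re, Finset.sum_apply] using this
  have hIm : ∀ i, (g i).im = 0 := by
    apply hμ
    funext j
    have := congrArg Complex.im (h1 j)
    simpa [Complex.im_sum, Complex.mul_im, Finset.sum_apply] using this
  exact Complex.ext (hRe i) (hIm i)

/-- Dual quadrics: for linearly independent μC, every prescribed tuple of values can be
achieved by a homogeneous quadric. -/
lemma exists_quadric {r : ℕ} (μC : Fin r → Fin m → ℂ) (h : LinearIndependent ℂ μC)
    (c : Fin r → ℂ) :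
    ∃ p : MvPolynomial (Fin m) ℂ, p.IsHomogeneous 2 ∧
      ∀ i, MvPolynomial.eval (μC i) p = c i := by
  classical
  set F : (Fin r → ℂ) →ₗ[ℂ] (Fin m → ℂ) :=
    ∑ i, LinearMap.smulRight (LinearMap.proj i) (μC i) with hFdef
  have hF : ∀ d, F d = ∑ i, d i • μC i := by
    intro d
    simp [hFdef, LinearMap.sum_apply]
  have hker : LinearMap.ker F = ⊥ := by
    rw [LinearMap.ker_eq_bot']
    intro d hd
    have := Fintype.linearIndependent_iff.mp h d (by rw [← hF]; exact hd)
    funext i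
    exact this i
  obtain ⟨G, hG⟩ := LinearMap.exists_leftInverse_of_injective F hker
  have hGμ : ∀ i, G (μC i) = Pi.single i 1 := by
    intro i
    have h1 : F (Pi.single i 1) = μC i := by
      rw [hF, Finset.sum_eq_single i]
      · simp
      · intro b _ hb
        simp [Pi.single_eq_of_ne hb]
      · intro hi
        exact absurd (Finset.mem_univ i) hi
    calc G (μC i) = (G ∘ₗ F) (Pi.single i 1) := by rw [LinearMap.comp_apply, h1]
    _ = Pi.single i 1 := by rw [hG]; rfl
  set cv : Fin r → Fin m → ℂ := fun k j => G (Pi.single j 1) k with hcv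
  have hdual : ∀ k i, ∑ j, cv k j * μC i j = if i = k then 1 else 0 := by
    intro k i
    have hsingle : ∑ j, μC i j • (Pi.single j 1 : Fin m → ℂ) = μC i := by
      funext j'
      simp [Finset.sum_apply, Pi.single_apply]
    have : ∑ j, cv k j * μC i j = (G (∑ j, μC i j • (Pi.single j 1 : Fin m → ℂ))) k := by
      rw [map_sum]
      simp only [Finset.sum_apply, hcv, map_smul, Pi.smul_apply, smul_eq_mul]
      exact Finset.sum_congr rfl fun j _ => mul_comm _ _
    rw [this, hsingle, hGμ, Pi.single_apply]
    simp [eq_comm]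
  refine ⟨∑ k, C (c k) * (linForm (cv k)) ^ 2, ?_, ?_⟩
  · refine MvPolynomial.IsHomogeneous.sum _ _ _ fun k _ => ?_
    have := ((linForm_isHomogeneous (cv k)).pow 2).C_mul (c k)
    simpa using this
  · intro i
    rw [map_sum]
    simp only [eval_mul, eval_C, map_pow, eval_linForm_s8]
    have hterm : ∀ k, c k * (∑ j, cv k j * μC i j) ^ 2 = if i = k then c k else 0 := by
      intro k
      rw [hdual k i]
      split <;> simp
    simp_rw [hterm]
    simp

end aux

/-- for r ≤ m, nonzero ω_i ∈ ℂ and μ₁,…,μ_r ∈ ℝ^m linearly independent,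
the kernel of the Hankel map H_T^{1,2} : p ∈ ℂ[X]₂ ↦ (⟨T, X_j p⟩_3)_j of
T = Σ ω_i (μ_i·X)³ is exactly the space of homogeneous quadrics vanishing at each μ_i;
in particular this kernel has dimension m(m+1)/2 - r and the Hankel map has rank r. -/
theorem statement_8 (m r : ℕ) (hrm : r ≤ m)
    (ω : Fin r → ℂ) (hω : ∀ i, ω i ≠ 0)
    (μ : Fin r → Fin m → ℝ) (hμ : LinearIndependent ℝ μ)
    (T : MvPolynomial (Fin m) ℂ)
    (hT : T = ∑ i, C (ω i) * linForm (fun j => (μ i j : ℂ)) ^ 3) :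
    (∀ p : MvPolynomial (Fin m) ℂ, p.IsHomogeneous 2 →
      ((∀ j, apolar T (X j * p) = 0) ↔
        ∀ i, MvPolynomial.eval (fun j => (μ i j : ℂ)) p = 0)) ∧
    (∃ K : Submodule ℂ (MvPolynomial (Fin m) ℂ),
      (∀ p, p ∈ K ↔ p.IsHomogeneous 2 ∧ ∀ j, apolar T (X j * p) = 0) ∧
      Module.finrank ℂ K = m * (m + 1) / 2 - r) ∧
    (∃ I : Submodule ℂ (Fin m → ℂ),
      (∀ w, w ∈ I ↔ ∃ p : MvPolynomial (Fin m) ℂ, p.IsHomogeneous 2 ∧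
        w = fun j => apolar T (X j * p)) ∧
      Module.finrank ℂ I = r) := by
  classical
  set μC : Fin r → Fin m → ℂ := fun i j => (μ i j : ℂ) with hμC'
  have hμC : LinearIndependent ℂ μC := linIndep_complex μ hμ
  have hωc : ∀ i, (starRingEnd ℂ) (ω i) ≠ 0 := fun i => by
    simpa using hω i
  -- key formula
  have key : ∀ (p : MvPolynomial (Fin m) ℂ), p.IsHomogeneous 2 → ∀ j,
      apolar T (X j * p) =
        ∑ i, (starRingEnd ℂ) (ω i) * (μC i j * MvPolynomial.eval (μC i) p) := by
    intro p hp j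
    have hq : (X j * p).IsHomogeneous 3 := by
      have := (MvPolynomial.isHomogeneous_X ℂ j).mul hp
      simpa using this
    rw [hT, apolar_sum]
    refine Finset.sum_congr rfl fun i _ => ?_
    rw [apolar_C_mul, apolar_linForm_pow (μ i) _ hq]
    rw [eval_mul, eval_X]
  -- Part 1
  have part1 : ∀ p : MvPolynomial (Fin m) ℂ, p.IsHomogeneous 2 →
      ((∀ j, apolar T (X j * p) = 0) ↔ ∀ i, MvPolynomial.eval (μC i) p = 0) := by
    intro p hp
    constructor
    · intro hap
      have hzero : ∑ i, ((starRingEnd ℂ) (ω i) * MvPolynomial.eval (μC i) p) • μC i = 0 := by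
        funext j
        simp only [Finset.sum_apply, Pi.zero_apply]
        rw [← hap j, key p hp j]
        refine Finset.sum_congr rfl fun i _ => ?_
        simp only [Pi.smul_apply, smul_eq_mul]
        ring
      have := Fintype.linearIndependent_iff.mp hμC _ hzero
      intro i
      have hi := this i
      rcases mul_eq_zero.mp hi with h | h
      · exact absurd h (hωc i)
      · exact h
    · intro hev j
      rw [key p hp j]
      refine Finset.sum_eq_zero fun i _ => ?_
      rw [hev i]
      ring
  refine ⟨part1, ?_, ?_⟩
  -- the evaluation linear map
  · set Φ : MvPolynomial (Fin m) ℂ →ₗ[ℂ] (Fin r → ℂ) :=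
      LinearMap.pi (fun i => (MvPolynomial.aeval (μC i)).toLinearMap) with hΦdef
    have hΦ : ∀ p i, Φ p i = MvPolynomial.eval (μC i) p := by
      intro p i
      simp [hΦdef, LinearMap.pi_apply, MvPolynomial.aeval_def]
    set V : Submodule ℂ (MvPolynomial (Fin m) ℂ) := homogeneousSubmodule (Fin m) ℂ 2 with hVdef
    refine ⟨V ⊓ LinearMap.ker Φ, ?_, ?_⟩
    · intro p
      rw [Submodule.mem_inf, LinearMap.mem_ker]
      constructor
      · rintro ⟨h1, h2⟩
        have hhom : p.IsHomogeneous 2 := h1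
        refine ⟨hhom, (part1 p hhom).mpr fun i => ?_⟩
        have := congrFun h2 i
        rw [hΦ p i] at this
        exact this
      · rintro ⟨h1, h2⟩
        refine ⟨h1, ?_⟩
        funext i
        rw [hΦ p i]
        exact (part1 p h1).mp h2 i
    · -- rank-nullity
      haveI : FiniteDimensional ℂ V := homog2_finiteDimensional
      set ΦV : V →ₗ[ℂ] (Fin r → ℂ) := Φ ∘ₗ V.subtype with hΦV
      have hsurj : LinearMap.range ΦV = ⊤ := by
        rw [LinearMap.range_eq_top]
        intro c
        obtain ⟨p, hhom, hev⟩ := exists_quadric μC hμC c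
        refine ⟨⟨p, hhom⟩, ?_⟩
        funext i
        rw [hΦV]
        simp only [LinearMap.comp_apply, Submodule.coe_subtype]
        rw [hΦ p i]
        exact hev i
      have hkerΦV : LinearMap.ker ΦV = Submodule.comap V.subtype (V ⊓ LinearMap.ker Φ) := by
        rw [hΦV, LinearMap.ker_comp, Submodule.comap_inf, Submodule.comap_subtype_self,
          top_inf_eq]
      have e1 : (V ⊓ LinearMap.ker Φ : Submodule ℂ (MvPolynomial (Fin m) ℂ)) ≃ₗ[ℂ]
          LinearMap.ker ΦV := by
        rw [hkerΦV]
        exact (Submodule.comapSubtypeEquivOfLe inf_le_left).symm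
      have hrn := LinearMap.finrank_range_add_finrank_ker ΦV
      rw [hsurj] at hrn
      have htop : Module.finrank ℂ (⊤ : Submodule ℂ (Fin r → ℂ)) = r := by
        rw [finrank_top, Module.finrank_pi, Fintype.card_fin]
      have hV : Module.finrank ℂ V = m * (m + 1) / 2 := finrank_homog2
      rw [htop, hV] at hrn
      set_option synthInstance.maxHeartbeats 1000000 in
      have h2 : Module.finrank ℂ ↥(V ⊓ LinearMap.ker Φ) = Module.finrank ℂ ↥(LinearMap.ker ΦV) :=
        e1.finrank_eq
      omega
  -- Part 3: the image
  · refine ⟨Submodule.span ℂ (Set.range μC), ?_, ?_⟩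
    · intro w
      rw [Submodule.mem_span_range_iff_exists_fun]
      constructor
      · rintro ⟨c, hc⟩
        obtain ⟨p, hhom, hev⟩ := exists_quadric μC hμC
          (fun i => c i / (starRingEnd ℂ) (ω i))
        refine ⟨p, hhom, ?_⟩
        funext j
        rw [key p hhom j, ← hc, Finset.sum_apply]
        refine Finset.sum_congr rfl fun i _ => ?_
        rw [hev i]
        field_simp [hωc i]
        rw [Pi.smul_apply, smul_eq_mul]
        ring
      · rintro ⟨p, hhom, rfl⟩
        refine ⟨fun i => (starRingEnd ℂ) (ω i) * MvPolynomial.eval (μC i) p, ?_⟩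
        funext j
        rw [Finset.sum_apply, key p hhom j]
        refine Finset.sum_congr rfl fun i _ => ?_
        simp only [Pi.smul_apply, smul_eq_mul]
        ring
    · rw [finrank_span_eq_card hμC, Fintype.card_fin]
end

section
/- Let T ∈ ℂ[X]_d admit a decomposition with r terms, T = Σ_{i=1}^r ω_i (ξ_i·X)^d with ω_i ∈ ℂ and ξ_i ∈ ℂ^m, and suppose that for some 0 ≤ k ≤ d the Hankel matrix H_T^{k,d−k} has rank r. Then the Waring rank of T equals r, i.e. T admits no decomposition T = Σ_{i=1}^{r'} ω'_i (ξ'_i·X)^d with r' < r terms. -/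
open MvPolynomial

/-- The monomial `X^γ`. -/
noncomputable def monomOf {m : ℕ} (γ : Fin m → ℕ) : MvPolynomial (Fin m) ℂ :=
  ∏ i, X i ^ γ i

/-- The Hankel matrix `H_T^{k,d-k}`: rows indexed by exponents α with |α| = k, columns
indexed by exponents β with |β| = d-k, entries `⟨T, X^{α+β}⟩_d`. -/
noncomputable def hankel (m d k : ℕ) (T : MvPolynomial (Fin m) ℂ) :
    Matrix (Finset.Nat.antidiagonalTuple m k) (Finset.Nat.antidiagonalTuple m (d - k)) ℂ :=
  fun α β => apolar T (monomOf ((α : Fin m → ℕ) + (β : Fin m → ℕ)))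

/-- The vector `ξ^{(k)} = (ξ^α)_{|α|=k}`. -/
noncomputable def powVec {m : ℕ} (k : ℕ) (ξ : Fin m → ℂ) :
    Finset.Nat.antidiagonalTuple m k → ℂ :=
  fun α => ∏ j, ξ j ^ (α : Fin m → ℕ) j

lemma monomOf_eq {m : ℕ} (γ : Fin m → ℕ) :
    monomOf γ = monomial (Finsupp.equivFunOnFinite.symm γ) 1 := by
  rw [← prod_X_pow_eq_monomial, monomOf]
  refine (Finset.prod_subset (Finset.subset_univ _) ?_).symm
  intro x _ hx
  have : (Finsupp.equivFunOnFinite.symm γ) x = 0 := Finsupp.notMem_support_iff.mp hx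
  simp only [Finsupp.coe_equivFunOnFinite_symm] at this ⊢
  simp [this]

lemma coeff_linForm_pow_s13 {m d : ℕ} (v : Fin m → ℂ) (γ : Fin m → ℕ) :
    coeff (Finsupp.equivFunOnFinite.symm γ) (linForm v ^ d) =
      if ∑ i, γ i = d then (Nat.multinomial Finset.univ γ : ℂ) * ∏ j, v j ^ γ j else 0 := by
  rw [linForm, Finset.sum_pow_eq_sum_piAntidiag]
  have key : ∀ k : Fin m → ℕ,
      (Nat.multinomial Finset.univ k : MvPolynomial (Fin m) ℂ) * ∏ i, (C (v i) * X i) ^ k i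
      = C ((Nat.multinomial Finset.univ k : ℂ) * ∏ j, v j ^ k j) * monomOf k := by
    intro k
    rw [monomOf]
    simp_rw [mul_pow, Finset.prod_mul_distrib, ← map_pow, ← map_prod, map_mul,
      ← C_eq_coe_nat]
    ring
  simp_rw [key]
  rw [MvPolynomial.coeff_sum]
  simp_rw [coeff_C_mul, monomOf_eq, coeff_monomial, EmbeddingLike.apply_eq_iff_eq,
    mul_ite, mul_one, mul_zero]
  rw [Finset.sum_ite_eq' (Finset.piAntidiag Finset.univ d) γ]
  simp [Finset.mem_piAntidiag]

lemma multinomial_support {m : ℕ} (γ : Fin m →₀ ℕ) :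
    Nat.multinomial γ.support γ = Nat.multinomial Finset.univ γ := by
  unfold Nat.multinomial
  rw [Finset.sum_subset (Finset.subset_univ _), Finset.prod_subset (Finset.subset_univ _)]
  · intro x _ h; simp [Finsupp.notMem_support_iff.mp h]
  · intro x _ h; exact Finsupp.notMem_support_iff.mp h

lemma apolar_monomOf {m : ℕ} (T : MvPolynomial (Fin m) ℂ) (γ : Fin m → ℕ) :
    apolar T (monomOf γ) =
      (starRingEnd ℂ) (coeff (Finsupp.equivFunOnFinite.symm γ) T) /
        (Nat.multinomial Finset.univ γ : ℂ) := by
  set γ' : Fin m →₀ ℕ := Finsupp.equivFunOnFinite.symm γ with hγ'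
  have hcoe : ⇑γ' = γ := rfl
  have hsupp : (monomOf γ).support = {γ'} := by
    rw [monomOf_eq, support_monomial, if_neg one_ne_zero]
  rw [apolar, hsupp]
  have hmulti : Nat.multinomial γ'.support γ' = Nat.multinomial Finset.univ γ := by
    rw [multinomial_support, hcoe]
  by_cases h : γ' ∈ T.support
  · rw [Finset.inter_singleton_of_mem h, Finset.sum_singleton, monomOf_eq, coeff_monomial,
      if_pos rfl, hmulti, mul_one]
  · rw [Finset.inter_singleton_of_notMem h, Finset.sum_empty,
      MvPolynomial.notMem_support_iff.mp h, map_zero, zero_div]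

/-- Hankel matrix of a sum of `d`-th powers of linear forms factors through `Fin r`. -/
lemma hankel_entry {m d k r : ℕ} (hk : k ≤ d) (ω : Fin r → ℂ) (ξ : Fin r → Fin m → ℂ)
    (α : Finset.Nat.antidiagonalTuple m k) (β : Finset.Nat.antidiagonalTuple m (d - k)) :
    hankel m d k (∑ i, C (ω i) * linForm (ξ i) ^ d) α β =
      ∑ i, ((starRingEnd ℂ) (ω i) * powVec k (fun j => (starRingEnd ℂ) (ξ i j)) α) *
        powVec (d - k) (fun j => (starRingEnd ℂ) (ξ i j)) β := by
  set γ : Fin m → ℕ := (α : Fin m → ℕ) + (β : Fin m → ℕ) with hγ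
  have hα : ∑ j, (α : Fin m → ℕ) j = k := Finset.Nat.mem_antidiagonalTuple.mp α.2
  have hβ : ∑ j, (β : Fin m → ℕ) j = d - k := Finset.Nat.mem_antidiagonalTuple.mp β.2
  have hγd : ∑ i, γ i = d := by
    simp only [hγ, Pi.add_apply, Finset.sum_add_distrib, hα, hβ]
    omega
  have hN : (Nat.multinomial Finset.univ γ : ℂ) ≠ 0 := by
    exact Nat.cast_ne_zero.mpr (Nat.multinomial_pos _ _).ne'
  rw [hankel, apolar_monomOf]
  have hcoeff : coeff (Finsupp.equivFunOnFinite.symm γ)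
      (∑ i, C (ω i) * linForm (ξ i) ^ d) =
      ∑ i, ω i * ((Nat.multinomial Finset.univ γ : ℂ) * ∏ j, ξ i j ^ γ j) := by
    rw [MvPolynomial.coeff_sum]
    congr 1; funext i
    rw [coeff_C_mul, coeff_linForm_pow_s13, if_pos hγd]
  rw [hcoeff, map_sum]
  rw [Finset.sum_div]
  congr 1; funext i
  rw [map_mul, map_mul, map_natCast, map_prod]
  simp_rw [map_pow]
  rw [powVec, powVec]
  have : ∏ j, (starRingEnd ℂ) (ξ i j) ^ γ j =
      (∏ j, (starRingEnd ℂ) (ξ i j) ^ (α : Fin m → ℕ) j) *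
      ∏ j, (starRingEnd ℂ) (ξ i j) ^ (β : Fin m → ℕ) j := by
    rw [← Finset.prod_mul_distrib]
    congr 1; funext j
    rw [hγ, Pi.add_apply, pow_add]
  rw [this]
  rw [← hγ]
  field_simp

/-- if T admits a decomposition with r terms and rank H_T^{k,d-k} = r
for some 0 ≤ k ≤ d, then T has Waring rank r: it admits no decomposition with fewer
than r terms. -/
theorem statement_13 (m d k r : ℕ) (hk : k ≤ d)
    (ω : Fin r → ℂ) (ξ : Fin r → Fin m → ℂ)
    (T : MvPolynomial (Fin m) ℂ) (hT : T = ∑ i, C (ω i) * linForm (ξ i) ^ d)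
    (hrank : (hankel m d k T).rank = r) :
    ∀ r' : ℕ, r' < r →
      ¬ ∃ (ω' : Fin r' → ℂ) (ξ' : Fin r' → Fin m → ℂ),
          T = ∑ i, C (ω' i) * linForm (ξ' i) ^ d := by
  intro r' hr' ⟨ω', ξ', hT'⟩
  set A : Matrix (Finset.Nat.antidiagonalTuple m k) (Fin r') ℂ :=
    fun α i => (starRingEnd ℂ) (ω' i) * powVec k (fun j => (starRingEnd ℂ) (ξ' i j)) α with hA
  set B : Matrix (Fin r') (Finset.Nat.antidiagonalTuple m (d - k)) ℂ :=
    fun i β => powVec (d - k) (fun j => (starRingEnd ℂ) (ξ' i j)) β with hB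
  have hfac : hankel m d k T = A * B := by
    funext α β
    rw [hT', hankel_entry hk, Matrix.mul_apply]
  have : (hankel m d k T).rank ≤ r' := by
    rw [hfac]
    calc (A * B).rank ≤ B.rank := Matrix.rank_mul_le_right A B
    _ ≤ Fintype.card (Fin r') := B.rank_le_card_height
    _ = r' := Fintype.card_fin r'
  omega
end
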